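/- Let A be a real d×n matrix, b ∈ ℝ^d, P a real m×n matrix, f : ℝ → ℝ convex and three times differentiable, ε > 0, R > 0, τ > 0, and w ∈ ℝ^m with Φ(w) > 0. Let r_i = R^{−2}(f''(w_i) + ε·Φ(w)/m), suppose there exists x* with A x* = b and ‖P x*‖_∞ ≤ R, and let Δ̃ attain the minimum of ∑_i r_i (PΔ)_i² over {Δ : AΔ = b}. Let I be a nonempty subset of { i : |(PΔ̃)_i| ≥ R·τ }, and define r' by r'_i = r_i/(1+ε) for i ∈ I and r'_i = r_i otherwise. Then Ψ(r') ≤ Ψ(r)·(1 − ε²τ²/(2(1+ε)²·m)), where Ψ(s) = inf{ ∑_i s_i (PΔ)_i² : AΔ = b }. -/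

import Mathlib

/-!
Let `Δ̃` be the minimiser for the resistances `r`, so `Ψ(r)` is its energy. Keeping `Δ̃` after
dividing the resistances on `I` by `1 + ε` already saves `ε/(1+ε)` of the energy on `I`, which is
at least `ε/(1+ε) · (εΦ/(mR²)) · (Rτ)²` because every resistance is at least `εΦ/(mR²)` and every
coordinate of `I` has width at least `Rτ`. On the other hand the feasible `x*` has all coordinates
of `Px*` bounded by `R`, so `Ψ(r) ≤ R² ∑ rᵢ = (1+ε)Φ`. Comparing the two bounds gives the decrease,
with a factor `2` to spare.
-/

open Finset Matrix

theorem ConvexOn.deriv_deriv_nonneg {f : ℝ → ℝ} (hf : ConvexOn ℝ Set.univ f)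
    (hd : Differentiable ℝ f) (x : ℝ) : 0 ≤ deriv (deriv f) x :=
  (monotoneOn_univ.1 (hf.monotoneOn_deriv fun y _ => hd y)).deriv_nonneg

theorem sum_mul_sq_le_of_norm_le {ι : Type*} [Fintype ι] {r x : ι → ℝ} {R : ℝ}
    (hr : ∀ i, 0 ≤ r i) (hx : ‖x‖ ≤ R) : ∑ i, r i * x i ^ 2 ≤ (∑ i, r i) * R ^ 2 := by
  rw [sum_mul]
  refine sum_le_sum fun i _ => mul_le_mul_of_nonneg_left ?_ (hr i)
  have hxi : |x i| ≤ R := (norm_le_pi_norm x i).trans hx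
  exact sq_le_sq.2 (hxi.trans (le_abs_self R))

theorem sum_mul_eq_sub_of_eq_div_on {ι : Type*} [Fintype ι] (I : Finset ι) {r r' p : ι → ℝ}
    {a : ℝ} (hI : ∀ i ∈ I, r' i = r i / a) (hIc : ∀ i ∉ I, r' i = r i) :
    ∑ i, r' i * p i = ∑ i, r i * p i - (1 - a⁻¹) * ∑ i ∈ I, r i * p i := by
  classical
  have hin : ∑ i ∈ I, r' i * p i = a⁻¹ * ∑ i ∈ I, r i * p i := by
    rw [mul_sum]
    exact sum_congr rfl fun i hi => by rw [hI i hi]; ring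
  have hout : ∑ i ∈ Iᶜ, r' i * p i = ∑ i ∈ Iᶜ, r i * p i :=
    sum_congr rfl fun i hi => by rw [hIc i (mem_compl.1 hi)]
  rw [← sum_add_sum_compl I, ← sum_add_sum_compl I (fun i => r i * p i), hin, hout]
  ring

section Resistances

variable {m : ℕ} {c r : Fin m → ℝ} {ε R : ℝ}

theorem sum_resistances (hm : m ≠ 0)
    (hr : ∀ i, r i = 1 / R ^ 2 * (c i + ε * (∑ j, c j) / m)) :
    ∑ i, r i = (1 + ε) * (∑ j, c j) / R ^ 2 := by
  simp_rw [hr]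
  rw [← mul_sum, sum_add_distrib, sum_const, card_univ, Fintype.card_fin, nsmul_eq_mul]
  field_simp

theorem div_le_resistance (hc : ∀ i, 0 ≤ c i)
    (hr : ∀ i, r i = 1 / R ^ 2 * (c i + ε * (∑ j, c j) / m)) (i : Fin m) :
    ε * (∑ j, c j) / m / R ^ 2 ≤ r i := by
  rw [hr i, one_div_mul_eq_div]
  gcongr
  exact le_add_of_nonneg_left (hc i)

theorem resistance_nonneg (hε : 0 ≤ ε) (hc : ∀ i, 0 ≤ c i)
    (hr : ∀ i, r i = 1 / R ^ 2 * (c i + ε * (∑ j, c j) / m)) (i : Fin m) : 0 ≤ r i := by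
  have hΦ : 0 ≤ ∑ j, c j := sum_nonneg fun j _ => hc j
  exact (by positivity : (0 : ℝ) ≤ _).trans (div_le_resistance hc hr i)

theorem sum_resistance_mul_sq_le (hm : m ≠ 0) (hR : R ≠ 0) (hε : 0 ≤ ε) (hc : ∀ i, 0 ≤ c i)
    (hr : ∀ i, r i = 1 / R ^ 2 * (c i + ε * (∑ j, c j) / m)) {x : Fin m → ℝ} (hx : ‖x‖ ≤ R) :
    ∑ i, r i * x i ^ 2 ≤ (1 + ε) * ∑ j, c j := calc
  _ ≤ (∑ i, r i) * R ^ 2 := sum_mul_sq_le_of_norm_le (resistance_nonneg hε hc hr) hx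
  _ = (1 + ε) * ∑ j, c j := by
    rw [sum_resistances hm hr]
    exact div_mul_cancel₀ _ (pow_ne_zero 2 hR)

theorem le_resistance_mul_sq (hR : 0 < R) {τ : ℝ} (hτ : 0 ≤ τ) (hε : 0 ≤ ε) (hc : ∀ i, 0 ≤ c i)
    (hr : ∀ i, r i = 1 / R ^ 2 * (c i + ε * (∑ j, c j) / m)) {i : Fin m} {y : ℝ}
    (hy : R * τ ≤ |y|) : ε * (∑ j, c j) * τ ^ 2 / m ≤ r i * y ^ 2 := calc
  _ = ε * (∑ j, c j) / m / R ^ 2 * (R * τ) ^ 2 := by field_simp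
  _ ≤ r i * y ^ 2 := by
    have hy2 : (R * τ) ^ 2 ≤ y ^ 2 := by
      simpa only [sq_abs] using pow_le_pow_left₀ (by positivity) hy 2
    exact mul_le_mul (div_le_resistance hc hr i) hy2 (by positivity)
      (resistance_nonneg hε hc hr i)

end Resistances

section Energy

variable {κ ν ι : Type*} [Fintype ν] [Fintype ι]
  {A : Matrix κ ν ℝ} {b : κ → ℝ} {P : Matrix ι ν ℝ} {s : ι → ℝ} {Δ : ν → ℝ}

/-- The paper's `Ψ(s)`. -/
noncomputable def energyInf (A : Matrix κ ν ℝ) (b : κ → ℝ) (P : Matrix ι ν ℝ) (s : ι → ℝ) : ℝ :=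
  sInf {v : ℝ | ∃ Δ : ν → ℝ, A.mulVec Δ = b ∧ v = ∑ i, s i * (P.mulVec Δ) i ^ 2}

theorem energyInf_le (hs : ∀ i, 0 ≤ s i) (hΔ : A *ᵥ Δ = b) :
    energyInf A b P s ≤ ∑ i, s i * (P *ᵥ Δ) i ^ 2 := by
  refine csInf_le ⟨0, ?_⟩ ⟨Δ, hΔ, rfl⟩
  rintro _ ⟨Δ', -, rfl⟩
  exact sum_nonneg fun i _ => mul_nonneg (hs i) (sq_nonneg _)

theorem energyInf_eq_of_forall_le (hΔ : A *ᵥ Δ = b)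
    (hmin : ∀ Δ', A *ᵥ Δ' = b → ∑ i, s i * (P *ᵥ Δ) i ^ 2 ≤ ∑ i, s i * (P *ᵥ Δ') i ^ 2) :
    energyInf A b P s = ∑ i, s i * (P *ᵥ Δ) i ^ 2 := by
  refine IsLeast.csInf_eq ⟨⟨Δ, hΔ, rfl⟩, ?_⟩
  rintro _ ⟨Δ', hΔ', rfl⟩
  exact hmin Δ' hΔ'

theorem energyInf_le_sub_of_eq_div_on {r r' : ι → ℝ} {ε : ℝ} (I : Finset ι)
    (hr : ∀ i, 0 ≤ r i) (hε : 0 ≤ ε) (hΔ : A *ᵥ Δ = b)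
    (hmin : ∀ Δ', A *ᵥ Δ' = b → ∑ i, r i * (P *ᵥ Δ) i ^ 2 ≤ ∑ i, r i * (P *ᵥ Δ') i ^ 2)
    (hI : ∀ i ∈ I, r' i = r i / (1 + ε)) (hIc : ∀ i ∉ I, r' i = r i) :
    energyInf A b P r' ≤
      energyInf A b P r - ε / (1 + ε) * ∑ i ∈ I, r i * (P *ᵥ Δ) i ^ 2 := by
  have hr' : ∀ i, 0 ≤ r' i := fun i => by
    by_cases hi : i ∈ I
    · rw [hI i hi]; exact div_nonneg (hr i) (by linarith)
    · rw [hIc i hi]; exact hr i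
  have hfactor : 1 - (1 + ε)⁻¹ = ε / (1 + ε) := by field_simp; ring
  rw [energyInf_eq_of_forall_le hΔ hmin, ← hfactor, ← sum_mul_eq_sub_of_eq_div_on I hI hIc]
  exact energyInf_le hr' hΔ

end Energy

theorem psi_decrease_width_step_general
    (d n m : ℕ) (A : Matrix (Fin d) (Fin n) ℝ) (b : Fin d → ℝ)
    (P : Matrix (Fin m) (Fin n) ℝ) (f : ℝ → ℝ)
    (hconv : ConvexOn ℝ Set.univ f)
    (hf1 : Differentiable ℝ f)
    (ε R τ : ℝ) (hε : 0 < ε) (hR : 0 < R) (hτ : 0 < τ)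
    (w : Fin m → ℝ)
    (r : Fin m → ℝ)
    (hr : ∀ i, r i = 1 / R ^ 2 *
      (deriv (deriv f) (w i) + ε * (∑ j, deriv (deriv f) (w j)) / m))
    (xstar : Fin n → ℝ) (hxA : A.mulVec xstar = b)
    (hxR : ‖P.mulVec xstar‖ ≤ R)
    (Δt : Fin n → ℝ) (hΔA : A.mulVec Δt = b)
    (hΔmin : ∀ Δ : Fin n → ℝ, A.mulVec Δ = b →
      (∑ i, r i * (P.mulVec Δt) i ^ 2) ≤ ∑ i, r i * (P.mulVec Δ) i ^ 2)
    (I : Finset (Fin m)) (hIne : I.Nonempty)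
    (hIwidth : ∀ i ∈ I, R * τ ≤ |(P.mulVec Δt) i|)
    (r' : Fin m → ℝ)
    (hr'I : ∀ i ∈ I, r' i = r i / (1 + ε))
    (hr'nI : ∀ i ∉ I, r' i = r i) :
    sInf {v : ℝ | ∃ Δ : Fin n → ℝ, A.mulVec Δ = b ∧
        v = ∑ i, r' i * (P.mulVec Δ) i ^ 2} ≤
      sInf {v : ℝ | ∃ Δ : Fin n → ℝ, A.mulVec Δ = b ∧
        v = ∑ i, r i * (P.mulVec Δ) i ^ 2} *
      (1 - ε ^ 2 * τ ^ 2 / (2 * (1 + ε) ^ 2 * m)) := by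
  obtain ⟨i₀, hi₀⟩ := hIne
  have hc : ∀ i, 0 ≤ deriv (deriv f) (w i) := fun i => hconv.deriv_deriv_nonneg hf1 _
  have hr₀ := resistance_nonneg hε.le hc hr
  have hV := (hΔmin xstar hxA).trans (sum_resistance_mul_sq_le i₀.pos.ne' hR.ne' hε.le hc hr hxR)
  have hK := (le_resistance_mul_sq hR hτ.le hε.le hc hr (hIwidth i₀ hi₀)).trans
    (single_le_sum (fun i _ => mul_nonneg (hr₀ i) (sq_nonneg _)) hi₀)
  have hstep := energyInf_le_sub_of_eq_div_on I hr₀ hε.le hΔA hΔmin hr'I hr'nI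
  change energyInf A b P r' ≤ energyInf A b P r * _
  rw [energyInf_eq_of_forall_le hΔA hΔmin] at hstep ⊢
  set Φ := ∑ j, deriv (deriv f) (w j)
  set V := ∑ i, r i * (P *ᵥ Δt) i ^ 2
  set K := ∑ i ∈ I, r i * (P *ᵥ Δt) i ^ 2
  have hΦ : 0 ≤ Φ := sum_nonneg fun i _ => hc i
  have hVq : V * (ε ^ 2 * τ ^ 2 / (2 * (1 + ε) ^ 2 * m)) ≤ ε / (1 + ε) * K := calc
    _ ≤ (1 + ε) * Φ * (ε ^ 2 * τ ^ 2 / (2 * (1 + ε) ^ 2 * m)) := by gcongr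
    _ = ε / (1 + ε) * (ε * Φ * τ ^ 2 / m) / 2 := by field_simp
    _ ≤ ε / (1 + ε) * (ε * Φ * τ ^ 2 / m) := half_le_self (by positivity)
    _ ≤ ε / (1 + ε) * K := by gcongr
  linarith

/-- Lemma 3.1, single width-reduction step, resistances decreased by (1+ε):
Ψ(r') ≤ Ψ(r)·(1 − ε²τ²/(2(1+ε)²·m)). -/
theorem psi_decrease_width_step
    (d n m : ℕ) (A : Matrix (Fin d) (Fin n) ℝ) (b : Fin d → ℝ)
    (P : Matrix (Fin m) (Fin n) ℝ) (f : ℝ → ℝ)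
    (hconv : ConvexOn ℝ Set.univ f)
    (hf1 : Differentiable ℝ f) (hf2 : Differentiable ℝ (deriv f))
    (hf3 : Differentiable ℝ (deriv (deriv f)))
    (ε R τ : ℝ) (hε : 0 < ε) (hR : 0 < R) (hτ : 0 < τ)
    (w : Fin m → ℝ) (hΦ : 0 < ∑ j, deriv (deriv f) (w j))
    (r : Fin m → ℝ)
    (hr : ∀ i, r i = 1 / R ^ 2 *
      (deriv (deriv f) (w i) + ε * (∑ j, deriv (deriv f) (w j)) / m))
    (xstar : Fin n → ℝ) (hxA : A.mulVec xstar = b)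
    (hxR : ‖P.mulVec xstar‖ ≤ R)
    (Δt : Fin n → ℝ) (hΔA : A.mulVec Δt = b)
    (hΔmin : ∀ Δ : Fin n → ℝ, A.mulVec Δ = b →
      (∑ i, r i * (P.mulVec Δt) i ^ 2) ≤ ∑ i, r i * (P.mulVec Δ) i ^ 2)
    (I : Finset (Fin m)) (hIne : I.Nonempty)
    (hIwidth : ∀ i ∈ I, R * τ ≤ |(P.mulVec Δt) i|)
    (r' : Fin m → ℝ)
    (hr'I : ∀ i ∈ I, r' i = r i / (1 + ε))
    (hr'nI : ∀ i ∉ I, r' i = r i) :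
    sInf {v : ℝ | ∃ Δ : Fin n → ℝ, A.mulVec Δ = b ∧
        v = ∑ i, r' i * (P.mulVec Δ) i ^ 2} ≤
      sInf {v : ℝ | ∃ Δ : Fin n → ℝ, A.mulVec Δ = b ∧
        v = ∑ i, r i * (P.mulVec Δ) i ^ 2} *
      (1 - ε ^ 2 * τ ^ 2 / (2 * (1 + ε) ^ 2 * m)) :=
  psi_decrease_width_step_general d n m A b P f hconv hf1 ε R τ hε hR hτ w r hr xstar hxA hxR Δt hΔA
    hΔmin I hIne hIwidth r' hr'I hr'nI
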